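/- arXiv:cond-mat/9805241 — 2 statements merged into one kernel-verified Lean document; each statement's English description precedes it below -/
import Mathlib

section
/- Under the duality hypothesis on T_0,…,T_5, for every v ∈ ℂ: Λ_{(4,2)/(1)}(v) = Λ_{(4,3)/(2)}(v + (3/5)i). -/
noncomputable section

/-- `T'_m`: equal to `T_m` for `0 ≤ m ≤ 5`, and the zero function otherwise. -/
def Tp (T : ℤ → ℂ → ℂ) (m : ℤ) : ℂ → ℂ :=
  if 0 ≤ m ∧ m ≤ 5 then T m else 0

/-- `Λ_{μ/λ}(v) := det_{1 ≤ j,k ≤ d} T'_{μ_j - λ_k - j + k}(v + i(d - μ_1 + μ_j + λ_k - j - k + 1))`,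
with rows and columns indexed by `j k : Fin d` (0-based, so row `j+1`, column `k+1`). -/
def Lam {d : ℕ} [NeZero d] (T : ℤ → ℂ → ℂ) (μ lam : Fin d → ℤ) (v : ℂ) : ℂ :=
  Matrix.det (Matrix.of fun j k : Fin d =>
    Tp T (μ j - lam k - ((j : ℕ) : ℤ) + ((k : ℕ) : ℤ))
      (v + Complex.I *
        (((d : ℤ) - μ 0 + μ j + lam k - ((j : ℕ) : ℤ) - ((k : ℕ) : ℤ) - 1 : ℤ) : ℂ)))

/-- The duality relation `T_m(v) = T_{5-m}(v + (8/5)i)` for `m = 0,…,5`. -/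
def DualityHyp (T : ℤ → ℂ → ℂ) : Prop :=
  ∀ m : ℤ, 0 ≤ m → m ≤ 5 → ∀ v : ℂ, T m v = T (5 - m) (v + (8 / 5 : ℂ) * Complex.I)

/-! Both sides are 2×2 determinants. The duality `T_m(u) = T_{5-m}(u + 8i/5)` carries each of
the four entries on the left to an entry on the right, with the two products of each expansion
preserved. -/

open Complex

theorem Tp_of_mem {T : ℤ → ℂ → ℂ} {m : ℤ} (h0 : 0 ≤ m) (h5 : m ≤ 5) : Tp T m = T m :=
  if_pos ⟨h0, h5⟩

theorem Lam_fin_two (T : ℤ → ℂ → ℂ) (μ lam : Fin 2 → ℤ) (v : ℂ) :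
    Lam T μ lam v =
      Tp T (μ 0 - lam 0) (v + I * ((1 + lam 0 : ℤ) : ℂ)) *
          Tp T (μ 1 - lam 1) (v + I * ((μ 1 - μ 0 + lam 1 - 1 : ℤ) : ℂ)) -
        Tp T (μ 0 - lam 1 + 1) (v + I * (lam 1 : ℂ)) *
          Tp T (μ 1 - lam 0 - 1) (v + I * ((μ 1 - μ 0 + lam 0 : ℤ) : ℂ)) := by
  simp only [Lam, Matrix.det_fin_two, Matrix.of_apply, Fin.val_zero, Fin.val_one]
  congr 3 <;> ring_nf

theorem DualityHyp.apply_eq {T : ℤ → ℂ → ℂ} (h : DualityHyp T) {m n : ℤ} (hm0 : 0 ≤ m)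
    (hm5 : m ≤ 5) (hmn : m + n = 5) {u u' : ℂ} (hu : u' = u + 8 / 5 * I) : T m u = T n u' := by
  rw [h m hm0 hm5, hu, ← hmn, add_sub_cancel_left]

theorem Lam_42_over_1 (T : ℤ → ℂ → ℂ) (v : ℂ) :
    Lam T ![4, 2] ![1, 0] v = T 3 (v + 2 * I) * T 2 (v - 3 * I) - T 5 v * T 0 (v - I) := by
  rw [Lam_fin_two]
  norm_num [Tp_of_mem]
  ring_nf

theorem Lam_43_over_2 (T : ℤ → ℂ → ℂ) (w : ℂ) :
    Lam T ![4, 3] ![2, 0] w = T 2 (w + 3 * I) * T 3 (w - 2 * I) - T 5 w * T 0 (w + I) := by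
  rw [Lam_fin_two]
  norm_num [Tp_of_mem]
  ring_nf

/-- Duality relation (2): `Λ_{(4,2)/(1)}(v) = Λ_{(4,3)/(2)}(v + (3/5)i)`. -/
theorem lam_duality_42_1 (T : ℤ → ℂ → ℂ) (hdual : DualityHyp T) (v : ℂ) :
    Lam T ![4, 2] ![1, 0] v = Lam T ![4, 3] ![2, 0] (v + (3 / 5 : ℂ) * Complex.I) := by
  set w := v + 3 / 5 * I with hw
  have h₃ : T 3 (v + 2 * I) = T 2 (w + 3 * I) :=
    hdual.apply_eq (by norm_num) (by norm_num) (by norm_num) (by rw [hw]; ring)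
  have h₂ : T 2 (v - 3 * I) = T 3 (w - 2 * I) :=
    hdual.apply_eq (by norm_num) (by norm_num) (by norm_num) (by rw [hw]; ring)
  have h₅ : T 5 v = T 0 (w + I) :=
    hdual.apply_eq (by norm_num) (by norm_num) (by norm_num) (by rw [hw]; ring)
  have h₀ : T 0 (v - I) = T 5 w :=
    hdual.apply_eq (by norm_num) (by norm_num) (by norm_num) (by rw [hw]; ring)
  rw [Lam_42_over_1, Lam_43_over_2, h₃, h₂, h₅, h₀]
  ring

end
end

section
/- Under the duality hypothesis on T_0,…,T_5, for every v ∈ ℂ: Λ_{(6,4,3)/(3,2)}(v) = Λ_{(5,4,2)/(3,1)}(v + (8/5)i). -/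
/-
Transposing the matrix of `Λ_{(5,4,2)/(3,1)}` gives a matrix whose `(j,k)` entry is
`T'_{5-m}(w + (8/5)i)` wherever the matrix of `Λ_{(6,4,3)/(3,2)}` has `T'_m(w)`: the two skew
diagrams are complementary in the sense that `μ - λ'` and `μ' - λ` are constant with sum `5`.
The duality relation, which extends to `T'` because `m ↦ 5 - m` preserves `{0,…,5}`, then
identifies the two matrices entrywise.
-/

noncomputable section

theorem Tp_eq_Tp_five_sub {T : ℤ → ℂ → ℂ} (hdual : DualityHyp T) (m : ℤ) (w : ℂ) :
    Tp T m w = Tp T (5 - m) (w + (8 / 5 : ℂ) * Complex.I) := by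
  by_cases hm : 0 ≤ m ∧ m ≤ 5
  · rw [Tp, Tp, if_pos hm, if_pos ⟨by omega, by omega⟩]
    exact hdual m hm.1 hm.2 w
  · rw [Tp, Tp, if_neg hm, if_neg (by omega)]
    rfl

theorem Lam_eq_Lam_add_of_complementary {d : ℕ} [NeZero d] {T : ℤ → ℂ → ℂ}
    (hdual : DualityHyp T) {μ lam μ' lam' : Fin d → ℤ} {p q : ℤ} (hpq : p + q = 5)
    (hμ : ∀ j, μ j = lam' j + p) (hμ' : ∀ k, μ' k = lam k + q) (h0 : μ 0 - p = μ' 0 - q)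
    (v : ℂ) :
    Lam T μ lam v = Lam T μ' lam' (v + (8 / 5 : ℂ) * Complex.I) := by
  rw [Lam, Lam, ← Matrix.det_transpose]
  congr 1
  ext k j
  have hj := hμ j
  have hk := hμ' k
  rw [Matrix.transpose_apply, Matrix.of_apply, Matrix.of_apply, Tp_eq_Tp_five_sub hdual,
    show 5 - (μ j - lam k - (j : ℕ) + (k : ℕ)) = μ' k - lam' j - (k : ℕ) + (j : ℕ) by omega,
    show (d : ℤ) - μ 0 + μ j + lam k - (j : ℕ) - (k : ℕ) - 1
      = (d : ℤ) - μ' 0 + μ' k + lam' j - (k : ℕ) - (j : ℕ) - 1 by omega,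
    add_right_comm]

/-- Duality relation (5): `Λ_{(6,4,3)/(3,2)}(v) = Λ_{(5,4,2)/(3,1)}(v + (8/5)i)`. -/
theorem lam_duality_643_32 (T : ℤ → ℂ → ℂ) (hdual : DualityHyp T) (v : ℂ) :
    Lam T ![6, 4, 3] ![3, 2, 0] v = Lam T ![5, 4, 2] ![3, 1, 0] (v + (8 / 5 : ℂ) * Complex.I) :=
  Lam_eq_Lam_add_of_complementary hdual (p := 3) (q := 2) rfl (by decide) (by decide) rfl v

end
end
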